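/- Let ζ = e^{2πi/96} ∈ ℂ (so q = ζ²⁴ = i = e^{2πi/4}). Let ε_m = −1 if m ≡ ±1 (mod 12), ε_m = +1 if m ≡ ±5 (mod 12), ε_m = 0 otherwise. For n ≥ 1 set J_n = −(ζ^{−36n²+24}/(ζ^{12n} − ζ^{−12n})) · Σ_{r=0}^{6n} ε_{6n−r} ζ^{r²−1} (the colored Jones polynomial of the right-handed trefoil T(2,3) evaluated with q^{1/24} = ζ) and [n] = (ζ^{12n} − ζ^{−12n})/(ζ^{12} − ζ^{−12}). Then (−i(ζ^{12} − ζ^{−12})/√8) · (Σ_{n=1}^{3} [n]² ζ^{−6(n²−1)} J_n²) / (Σ_{n=1}^{3} [n]² ζ^{−6(n²−1)}) = 1/2. (This is the SU(2) Chern–Simons partition function Z_CS[S³_{−1}(T(2,3) # T(2,3))] at level k = 4.) -/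

import Mathlib

open scoped Classical in
/-- `ε_m = −1` if `m ≡ ±1 (mod 12)`, `ε_m = +1` if `m ≡ ±5 (mod 12)`, `ε_m = 0` otherwise. -/
noncomputable def trefoilEps (m : ℤ) : ℤ :=
  if (m ≡ 1 [ZMOD 12] ∨ m ≡ -1 [ZMOD 12]) then -1
  else if (m ≡ 5 [ZMOD 12] ∨ m ≡ -5 [ZMOD 12]) then 1
  else 0

/-- `ζ = e^{2πi/96}`, so that `q = ζ²⁴ = i = e^{2πi/4}` (level `k = 4`). -/
noncomputable def ζ96 : ℂ := Complex.exp (2 * Real.pi * Complex.I / 96)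

/-- The colored Jones polynomial of the right-handed trefoil `T(2,3)` evaluated with
`q^{1/24} = ζ = e^{2πi/96}`:
`J_n = −(ζ^{−36n²+24}/(ζ^{12n} − ζ^{−12n})) Σ_{r=0}^{6n} ε_{6n−r} ζ^{r²−1}`. -/
noncomputable def J96 (n : ℕ) : ℂ :=
  -(ζ96 ^ (-36*(n:ℤ)^2 + 24) / (ζ96 ^ (12*(n:ℤ)) - ζ96 ^ (-(12*(n:ℤ))))) *
    ∑ r ∈ Finset.range (6*n + 1), (trefoilEps (6*(n:ℤ) - (r:ℤ)) : ℂ) * ζ96 ^ ((r:ℤ)^2 - 1)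

/-- The quantum integer `[n] = (ζ^{12n} − ζ^{−12n})/(ζ^{12} − ζ^{−12})`. -/
noncomputable def qint96 (n : ℕ) : ℂ :=
  (ζ96 ^ (12*(n:ℤ)) - ζ96 ^ (-(12*(n:ℤ)))) / (ζ96 ^ (12:ℤ) - ζ96 ^ (-12:ℤ))


/-!
Write `ζ8 = ζ96 ^ 12`, i.e. `q^{1/2}` at `q = i`. The sign `ε_{6n-r}` vanishes unless `r` is prime
to `6`, and then `r² - 1` is divisible by `24`; so every power of `ζ96` surviving in `J_1, J_2, J_3`
is a power of `ζ8`, and `ζ8⁴ = -1` evaluates them to `1, -1, 1`. Since `J_n² = 1`, the quotient of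
the two sums is `1` (the denominator is `2 ζ96⁻¹⁸ ≠ 0`), leaving the prefactor
`-i (ζ8 - ζ8⁻¹) / √8 = -i · i√2 / (2√2) = 1/2`.
-/

open Complex

noncomputable def ζ8 : ℂ := exp (2 * Real.pi * I / 8)

lemma ζ96_ne_zero : ζ96 ≠ 0 := exp_ne_zero _

lemma ζ8_ne_zero : ζ8 ≠ 0 := exp_ne_zero _

lemma ζ96_pow_twelve : ζ96 ^ 12 = ζ8 := by
  rw [ζ96, ζ8, ← exp_nat_mul]
  congr 1
  push_cast
  ring

lemma ζ96_pow_of_dvd {m : ℕ} (h : 12 ∣ m) : ζ96 ^ m = ζ8 ^ (m / 12) := by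
  obtain ⟨k, rfl⟩ := h
  rw [pow_mul, ζ96_pow_twelve, Nat.mul_div_cancel_left k (by norm_num)]

lemma ζ8_pow_four : ζ8 ^ 4 = -1 := by
  rw [ζ8, ← exp_nat_mul, ← exp_pi_mul_I]
  congr 1
  push_cast
  ring

lemma ζ8_eq : ζ8 = (Real.sqrt 2 / 2 : ℝ) * (1 + I) := by
  rw [ζ8, show 2 * Real.pi * I / 8 = (Real.pi / 4 : ℝ) * I by push_cast; ring, exp_mul_I,
    ← ofReal_cos, ← ofReal_sin, Real.cos_pi_div_four, Real.sin_pi_div_four]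
  ring

lemma ζ8_sub_inv : ζ8 - ζ8⁻¹ = Real.sqrt 2 * I := by
  have h2 : ((Real.sqrt 2 : ℝ) : ℂ) ^ 2 = 2 := by
    norm_cast
    exact Real.sq_sqrt (by norm_num)
  have hinv : ζ8⁻¹ = (Real.sqrt 2 / 2 : ℝ) * (1 - I) := by
    refine inv_eq_of_mul_eq_one_right ?_
    rw [ζ8_eq]
    push_cast
    linear_combination (1 / 2) * h2 - ((Real.sqrt 2 : ℂ) ^ 2 / 4) * I_sq
  rw [hinv, ζ8_eq]
  push_cast
  ring

lemma ofReal_sqrt_two_ne_zero : ((Real.sqrt 2 : ℝ) : ℂ) ≠ 0 := by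
  exact_mod_cast (Real.sqrt_pos.2 two_pos).ne'

lemma ζ8_sub_inv_ne_zero : ζ8 - ζ8⁻¹ ≠ 0 := by
  rw [ζ8_sub_inv]
  exact mul_ne_zero ofReal_sqrt_two_ne_zero I_ne_zero

lemma neg_I_mul_ζ8_sub_inv_div_sqrt_eight :
    -I * (ζ8 - ζ8⁻¹) / (Real.sqrt 8 : ℂ) = 1 / 2 := by
  have h8 : Real.sqrt 8 = 2 * Real.sqrt 2 := by
    rw [show (8:ℝ) = 2 ^ 2 * 2 by norm_num, Real.sqrt_mul (by positivity),
      Real.sqrt_sq (by norm_num)]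
  have := ofReal_sqrt_two_ne_zero
  rw [ζ8_sub_inv, h8]
  push_cast
  field_simp
  linear_combination -I_sq

lemma J96_one : J96 1 = 1 := by
  simp only [J96, Finset.sum_range_succ, Finset.sum_range_zero]
  norm_num [trefoilEps, Int.ModEq]
  simp (disch := decide) only [ζ96_pow_of_dvd, Nat.reduceDiv]
  grind [ζ8_pow_four]

lemma J96_two : J96 2 = -1 := by
  simp only [J96, Finset.sum_range_succ, Finset.sum_range_zero]
  norm_num [trefoilEps, Int.ModEq]
  simp (disch := decide) only [ζ96_pow_of_dvd, Nat.reduceDiv]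
  grind [ζ8_pow_four]

lemma J96_three : J96 3 = 1 := by
  simp only [J96, Finset.sum_range_succ, Finset.sum_range_zero]
  norm_num [trefoilEps, Int.ModEq]
  simp (disch := decide) only [ζ96_pow_of_dvd, Nat.reduceDiv]
  grind [ζ8_pow_four]

lemma J96_sq_eq_one {n : ℕ} (hn : n ∈ Finset.Icc 1 3) : J96 n ^ 2 = 1 := by
  fin_cases hn <;> simp [J96_one, J96_two, J96_three]

lemma qint96_eq (n : ℕ) : qint96 n = (ζ8 ^ n - (ζ8 ^ n)⁻¹) / (ζ8 - ζ8⁻¹) := by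
  simp only [qint96, zpow_neg, zpow_mul, zpow_ofNat, zpow_natCast, ζ96_pow_twelve]

lemma qint96_one : qint96 1 = 1 := by
  rw [qint96_eq, pow_one, div_self ζ8_sub_inv_ne_zero]

lemma qint96_two_sq : qint96 2 ^ 2 = 2 := by
  rw [qint96_eq, div_pow, div_eq_iff (pow_ne_zero 2 ζ8_sub_inv_ne_zero)]
  have := ζ8_ne_zero
  field_simp
  grind [ζ8_pow_four]

lemma qint96_three : qint96 3 = 1 := by
  rw [qint96_eq, div_eq_one_iff_eq ζ8_sub_inv_ne_zero]
  have := ζ8_ne_zero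
  field_simp
  grind [ζ8_pow_four]

lemma sum_qint96_sq_mul_ζ96_zpow :
    ∑ n ∈ Finset.Icc 1 3, (qint96 n) ^ 2 * ζ96 ^ (-6 * ((n:ℤ) ^ 2 - 1)) =
      2 * ζ96 ^ (-18 : ℤ) := by
  rw [Finset.sum_Icc_succ_top (by norm_num), Finset.sum_Icc_succ_top (by norm_num),
    Finset.Icc_self, Finset.sum_singleton]
  norm_num [qint96_one, qint96_two_sq, qint96_three]
  simp (disch := decide) only [ζ96_pow_of_dvd, Nat.reduceDiv, ζ8_pow_four]
  ring

/-- The SU(2) Chern–Simons partition function of `S³_{−1}(T(2,3) # T(2,3))` at level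
`k = 4` equals `1/2`:
`(−i(ζ¹² − ζ⁻¹²)/√8) · (Σ_{n=1}^{3} [n]² ζ^{−6(n²−1)} J_n²)/(Σ_{n=1}^{3} [n]² ζ^{−6(n²−1)}) = 1/2`. -/
theorem Z_CS_trefoil_connected_sum_level_four :
    (-Complex.I * (ζ96 ^ (12:ℤ) - ζ96 ^ (-12:ℤ)) / (Real.sqrt 8 : ℂ)) *
      ((∑ n ∈ Finset.Icc 1 3, (qint96 n)^2 * ζ96 ^ (-6*((n:ℤ)^2 - 1)) * (J96 n)^2) /
        (∑ n ∈ Finset.Icc 1 3, (qint96 n)^2 * ζ96 ^ (-6*((n:ℤ)^2 - 1))))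
      = 1 / 2 := by
  have hprefactor : ζ96 ^ (12:ℤ) - ζ96 ^ (-12:ℤ) = ζ8 - ζ8⁻¹ := by
    rw [zpow_neg, zpow_ofNat, ζ96_pow_twelve]
  have hden : ∑ n ∈ Finset.Icc 1 3, (qint96 n)^2 * ζ96 ^ (-6*((n:ℤ)^2 - 1)) ≠ 0 := by
    rw [sum_qint96_sq_mul_ζ96_zpow]
    exact mul_ne_zero two_ne_zero (zpow_ne_zero _ ζ96_ne_zero)
  rw [Finset.sum_congr rfl fun n hn => by rw [J96_sq_eq_one hn, mul_one], div_self hden,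
    mul_one, hprefactor, neg_I_mul_ζ8_sub_inv_div_sqrt_eight]
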